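/- Let a be a non-constant binary sequence of period n ≥ 2, and for 1 ≤ τ ≤ n-1 define the arithmetic autocorrelation A_a(τ) = 2w₂(σ(a) - σ(a^{(τ)})) - n if σ(a) > σ(a^{(τ)}), and A_a(τ) = n - 2w₂(σ(a^{(τ)}) - σ(a)) otherwise. Then |A_a(τ)| ≤ n - 2 for all 1 ≤ τ ≤ n-1. -/

import Mathlib

/-!
The integers `σ(a)` and `σ(a^{(τ)})` are binary expansions of length `n`, so they differ
because the words do, and `σ(a)` is neither `0` nor `2ⁿ - 1` because `a` is not constant.
Hence `d = |σ(a) - σ(a^{(τ)})|` lies in `[1, 2ⁿ - 2]`, and such a `d` has binary weight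
between `1` and `n - 1`, since `2 ^ w₂(d) ≤ d + 1`.
-/

def w2 (a : ℕ) : ℕ := (Nat.digits 2 a).sum

def sigma (n : ℕ) (a : ℕ → ℕ) : ℕ := ∑ l ∈ Finset.range n, a l * 2 ^ l

/-- arithmetic autocorrelation of the sequence `a` at shift `τ` -/
def arithAC (n : ℕ) (a : ℕ → ℕ) (τ : ℕ) : ℤ :=
  if sigma n a > sigma n (fun l => a (l + τ)) then
    2 * w2 (sigma n a - sigma n (fun l => a (l + τ))) - (n : ℤ)
  else
    (n : ℤ) - 2 * w2 (sigma n (fun l => a (l + τ)) - sigma n a)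

section Sigma

variable {n : ℕ} {a b : ℕ → ℕ}

lemma sigma_add_sigma_one_sub (ha : ∀ l < n, a l ≤ 1) :
    sigma n a + sigma n (fun l => 1 - a l) = 2 ^ n - 1 := by
  have hterm : ∀ l ∈ Finset.range n, a l * 2 ^ l + (1 - a l) * 2 ^ l = 2 ^ l := fun l hl => by
    rw [← add_mul, Nat.add_sub_cancel' (ha l (Finset.mem_range.mp hl)), one_mul]
  rw [sigma, sigma, ← Finset.sum_add_distrib, Finset.sum_congr rfl hterm]
  simpa using Nat.geomSum_eq le_rfl n

lemma sigma_lt_two_pow (ha : ∀ l < n, a l ≤ 1) : sigma n a < 2 ^ n := by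
  have := sigma_add_sigma_one_sub ha
  have := Nat.two_pow_pos n
  omega

lemma sigma_pos (ha : ∃ l < n, a l ≠ 0) : 0 < sigma n a := by
  obtain ⟨l, hl, hal⟩ := ha
  exact Finset.sum_pos' (fun _ _ => Nat.zero_le _)
    ⟨l, Finset.mem_range.mpr hl, Nat.mul_pos (Nat.pos_of_ne_zero hal) (Nat.two_pow_pos l)⟩

lemma sigma_succ : sigma (n + 1) a = sigma n a + a n * 2 ^ n :=
  Finset.sum_range_succ _ _

lemma eq_of_sigma_eq (ha : ∀ l < n, a l ≤ 1) (hb : ∀ l < n, b l ≤ 1)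
    (h : sigma n a = sigma n b) : ∀ l < n, a l = b l := by
  induction n with
  | zero => intro l hl; omega
  | succ m ih =>
    have ha' : ∀ l < m, a l ≤ 1 := fun l hl => ha l (by omega)
    have hb' : ∀ l < m, b l ≤ 1 := fun l hl => hb l (by omega)
    rw [sigma_succ, sigma_succ] at h
    have htop : a m = b m := by
      have hdiv := congrArg (· / 2 ^ m) h
      simp only [Nat.add_mul_div_right _ _ (Nat.two_pow_pos m),
        Nat.div_eq_of_lt (sigma_lt_two_pow ha'), Nat.div_eq_of_lt (sigma_lt_two_pow hb'),
        zero_add] at hdiv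
      exact hdiv
    have hlow : sigma m a = sigma m b := by
      rw [htop] at h
      exact Nat.add_right_cancel h
    intro l hl
    rcases Nat.lt_succ_iff_lt_or_eq.mp hl with hl | rfl
    · exact ih ha' hb' hlow l hl
    · exact htop

end Sigma

section BinaryWeight

lemma w2_eq_mod_add_w2_div {d : ℕ} (hd : 0 < d) : w2 d = d % 2 + w2 (d / 2) := by
  rw [w2, Nat.digits_def' one_lt_two hd, List.sum_cons, w2]

lemma w2_pos {d : ℕ} (hd : d ≠ 0) : 0 < w2 d := by
  induction d using Nat.strong_induction_on with
  | _ d ih =>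
    rw [w2_eq_mod_add_w2_div (Nat.pos_of_ne_zero hd)]
    rcases Nat.mod_two_eq_zero_or_one d with h | h
    · have := ih (d / 2) (by omega) (by omega)
      omega
    · omega

lemma two_pow_w2_le (d : ℕ) : 2 ^ w2 d ≤ d + 1 := by
  induction d using Nat.strong_induction_on with
  | _ d ih =>
    rcases Nat.eq_zero_or_pos d with rfl | hd
    · simp [w2]
    have ih' := ih (d / 2) (by omega)
    rw [w2_eq_mod_add_w2_div hd, pow_add]
    rcases Nat.mod_two_eq_zero_or_one d with h | h <;> rw [h] <;> omega

lemma w2_lt {n d : ℕ} (h : d + 1 < 2 ^ n) : w2 d < n :=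
  (Nat.pow_lt_pow_iff_right (by norm_num)).mp ((two_pow_w2_le d).trans_lt h)

lemma abs_two_mul_w2_sub_le {n d : ℕ} (hd : d ≠ 0) (h : d + 1 < 2 ^ n) :
    |2 * (w2 d : ℤ) - n| ≤ n - 2 := by
  have := w2_pos hd
  have := w2_lt h
  rw [abs_le]
  constructor <;> omega

end BinaryWeight

theorem arithAC_bound_general (n : ℕ) (a : ℕ → ℕ)
    (hbin : ∀ l, a l ≤ 1)
    (hnz : ∃ l < n, a l ≠ 0) (hno : ∃ l < n, a l ≠ 1)
    (hshift : ∀ τ, 1 ≤ τ → τ ≤ n - 1 → ∃ l < n, a (l + τ) ≠ a l) :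
    ∀ τ, 1 ≤ τ → τ ≤ n - 1 → |arithAC n a τ| ≤ (n : ℤ) - 2 := by
  intro τ hτ1 hτn
  have hS_pos : 0 < sigma n a := sigma_pos hnz
  have hS_compl : sigma n a + sigma n (fun l => 1 - a l) = 2 ^ n - 1 :=
    sigma_add_sigma_one_sub fun l _ => hbin l
  have hcompl_pos : 0 < sigma n (fun l => 1 - a l) := by
    obtain ⟨l, hl, hal⟩ := hno
    exact sigma_pos ⟨l, hl, by have := hbin l; omega⟩
  have hT_lt : sigma n (fun l => a (l + τ)) < 2 ^ n := sigma_lt_two_pow fun l _ => hbin _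
  have hST : sigma n a ≠ sigma n (fun l => a (l + τ)) := fun h => by
    obtain ⟨l, hl, hne⟩ := hshift τ hτ1 hτn
    exact hne (eq_of_sigma_eq (fun l _ => hbin _) (fun l _ => hbin l) h.symm l hl)
  unfold arithAC
  split_ifs with hgt
  · exact abs_two_mul_w2_sub_le (by omega) (by omega)
  · rw [← abs_neg, neg_sub]
    exact abs_two_mul_w2_sub_le (by omega) (by omega)

theorem arithAC_bound (n : ℕ) (hn : 2 ≤ n) (a : ℕ → ℕ)
    (hbin : ∀ l, a l ≤ 1) (hper : ∀ l, a (l + n) = a l)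
    (hnz : ∃ l < n, a l ≠ 0) (hno : ∃ l < n, a l ≠ 1)
    (hshift : ∀ τ, 1 ≤ τ → τ ≤ n - 1 → ∃ l < n, a (l + τ) ≠ a l) :
    ∀ τ, 1 ≤ τ → τ ≤ n - 1 → |arithAC n a τ| ≤ (n : ℤ) - 2 :=
  arithAC_bound_general n a hbin hnz hno hshift
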